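/- arXiv:2002.00070 — 2 statements merged into one kernel-verified Lean document; each statement's English description precedes it below -/
import Mathlib

section
/- The left eigenvector V = (0, βᵥεN̄ᵥ/(N̄ₕK₁), 0, 0, 1) satisfies V·J(E₀,β*) = 0 (as a row vector), where J(E₀,β*) is the Jacobian of the one-patch model at the DFE with βₕε = β* = N̄ₕK₂K₁/(βᵥεN̄ᵥ). -/
open Matrix

theorem stmt_11 (βv ε ξ1 θ1 q1 ξ2 θ2 q2 δ ρ μh μv ω Nh Nv : ℝ)
    (hβv : 0 < βv) (hε : 0 < ε)
    (hξ1 : 0 < ξ1) (hθ1 : 0 < θ1) (hq1 : q1 ∈ Set.Icc (0:ℝ) 1)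
    (hξ2 : 0 < ξ2) (hθ2 : 0 < θ2) (hq2 : q2 ∈ Set.Icc (0:ℝ) 1)
    (hδ : 0 < δ) (hρ : 0 < ρ) (hμh : 0 < μh) (hμv : 0 < μv) (hω : 0 < ω)
    (hNh : 0 < Nh) (hNv : 0 < Nv)
    (K1 K2 βstar : ℝ)
    (hK1 : K1 = ξ1 * θ1 * (1 - q1) + δ + ρ + μh)
    (hK2 : K2 = ξ2 * θ2 * (1 - q2) + μv)
    (hβstar : βstar = Nh * K2 * K1 / (βv * ε * Nv))
    (J : Matrix (Fin 5) (Fin 5) ℝ)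
    (hJ : J = !![-μh, 0, ω, 0, -βstar;
                 0, -K1, 0, 0, βstar;
                 0, ξ1 * θ1 * (1 - q1) + δ, -(ω + μh), 0, 0;
                 0, -(βv * ε * Nv / Nh), 0, -K2, 0;
                 0, βv * ε * Nv / Nh, 0, 0, -K2])
    (V : Fin 5 → ℝ)
    (hV : V = ![0, βv * ε * Nv / (Nh * K1), 0, 0, 1]) :
    J.vecMul V = 0 := by
  have hK1pos : 0 < K1 := by
    have h1 : 0 ≤ ξ1 * θ1 * (1 - q1) := by
      have h2 : 0 ≤ 1 - q1 := by linarith [hq1.2]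
      positivity
    linarith
  have hne : Nh * K1 ≠ 0 := by positivity
  have hne2 : βv * ε * Nv ≠ 0 := by positivity
  subst hJ hV hβstar
  funext j
  fin_cases j <;>
    simp [vecMul, dotProduct, Fin.sum_univ_five, vecHead, vecTail] <;>
    field_simp <;> ring
end

section
/- With W and V the right and left null eigenvectors of J(E₀,β*) normalized so that V·W = 1, the bifurcation coefficient b̃ = v₂ w₅ = βᵥεN̄ᵥ/(N̄ₕ(K₁+K₂)) is strictly positive, and the coefficient ã = −(2β*/N̄ₕ)v₂(w₂+w₃) − (2βᵥεN̄ᵥ/N̄ₕ²)w₂(w₁+w₃) − (βᵥε/N̄ₕ)w₂ − (βᵥεN̄ᵥ/N̄ₕ²)w₂² is strictly negative, since w₁, w₂, w₃, v₂ ≥ 0 and w₂ > 0. -/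
theorem stmt_12 (βv ε ξ1 θ1 q1 ξ2 θ2 q2 δ ρ μh μv ω Nh Nv : ℝ)
    (hβv : 0 < βv) (hε : 0 < ε)
    (hξ1 : 0 < ξ1) (hθ1 : 0 < θ1) (hq1 : q1 ∈ Set.Icc (0:ℝ) 1)
    (hξ2 : 0 < ξ2) (hθ2 : 0 < θ2) (hq2 : q2 ∈ Set.Icc (0:ℝ) 1)
    (hδ : 0 < δ) (hρ : 0 < ρ) (hμh : 0 < μh) (hμv : 0 < μv) (hω : 0 < ω)
    (hNh : 0 < Nh) (hNv : 0 < Nv)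
    (K1 K2 α βstar w1 w2 w3 v2 : ℝ)
    (hK1 : K1 = ξ1 * θ1 * (1 - q1) + δ + ρ + μh)
    (hK2 : K2 = ξ2 * θ2 * (1 - q2) + μv)
    (hα : α = (ω / (ω + μh)) * ((ξ1 * θ1 * (1 - q1) + δ) / K1))
    (hβstar : βstar = Nh * K2 * K1 / (βv * ε * Nv))
    (hw1 : w1 = βstar * (1 - α))
    (hw2 : w2 = K2 * Nh / (βv * ε * Nv))
    (hw3 : w3 = K2 * (ξ1 * θ1 * (1 - q1) + δ) * Nh / (βv * ε * (ω + μh) * Nv))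
    (hv2 : v2 = βv * ε * Nv / (Nh * (K1 + K2))) :
    0 < βv * ε * Nv / (Nh * (K1 + K2)) ∧
    -(2 * βstar / Nh) * (v2 * (w2 + w3))
      - (2 * βv * ε * Nv / Nh ^ 2) * (w2 * (w1 + w3))
      - (βv * ε / Nh) * w2
      - (βv * ε * Nv / Nh ^ 2) * w2 ^ 2 < 0 := by
  obtain ⟨hq1a, hq1b⟩ := hq1
  obtain ⟨hq2a, hq2b⟩ := hq2
  have h1 : (0:ℝ) ≤ ξ1 * θ1 * (1 - q1) :=
    mul_nonneg (by positivity) (by linarith)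
  have h2 : (0:ℝ) ≤ ξ2 * θ2 * (1 - q2) :=
    mul_nonneg (by positivity) (by linarith)
  have hK1p : 0 < K1 := by rw [hK1]; linarith
  have hK2p : 0 < K2 := by rw [hK2]; linarith
  have hden : 0 < βv * ε * Nv := by positivity
  have hβsp : 0 < βstar := by rw [hβstar]; positivity
  have hw2p : 0 < w2 := by rw [hw2]; positivity
  have hw3p : 0 ≤ w3 := by
    rw [hw3]
    have : 0 ≤ ξ1 * θ1 * (1 - q1) + δ := by linarith
    positivity
  have hv2p : 0 < v2 := by rw [hv2]; positivity
  have hαlt : α ≤ 1 := by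
    rw [hα]
    have h3 : ω / (ω + μh) < 1 := by
      rw [div_lt_one (by linarith)]; linarith
    have h4 : (ξ1 * θ1 * (1 - q1) + δ) / K1 ≤ 1 := by
      rw [div_le_one hK1p, hK1]; linarith
    have h5 : 0 ≤ (ξ1 * θ1 * (1 - q1) + δ) / K1 := by
      apply div_nonneg (by linarith) hK1p.le
    calc ω / (ω + μh) * ((ξ1 * θ1 * (1 - q1) + δ) / K1)
        ≤ 1 * ((ξ1 * θ1 * (1 - q1) + δ) / K1) := by
          apply mul_le_mul_of_nonneg_right h3.le h5
      _ = (ξ1 * θ1 * (1 - q1) + δ) / K1 := one_mul _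
      _ ≤ 1 := h4
  have hw1p : 0 ≤ w1 := by
    rw [hw1]; apply mul_nonneg hβsp.le; linarith
  refine ⟨by positivity, ?_⟩
  have t1 : 0 ≤ 2 * βstar / Nh * (v2 * (w2 + w3)) := by positivity
  have t2 : 0 ≤ 2 * βv * ε * Nv / Nh ^ 2 * (w2 * (w1 + w3)) := by
    apply mul_nonneg (by positivity)
    exact mul_nonneg hw2p.le (by linarith)
  have t3 : 0 < βv * ε / Nh * w2 := by positivity
  have t4 : 0 ≤ βv * ε * Nv / Nh ^ 2 * w2 ^ 2 := by positivity
  linarith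
end
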